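/- arXiv:2001.00293 — 2 statements merged into one kernel-verified Lean document; each statement's English description precedes it below -/
import Mathlib

section
/- Let d ≥ 1 and let s, l be real numbers with l ≥ s. Then there do not exist linear maps W₁, W₂, W₃ : ℝ^d → ℝ and vectors Y₀¹, Y₁¹, Y₀², Y₁², Y₀³, Y₁³ ∈ ℝ^d such that all four of the following hold simultaneously: W₁(Y₀¹) + W₂(Y₀²) + W₃(Y₀³) > l, W₁(Y₁¹) + W₂(Y₀²) + W₃(Y₀³) < s, W₁(Y₁¹) + W₂(Y₁²) + W₃(Y₁³) > l, and W₁(Y₀¹) + W₂(Y₁²) + W₃(Y₁³) < s. (Consequently, a linear tuplewise similarity function S(X₁, X₂, X₃) = Σᵢ WᵢXᵢ cannot score every hyperedge above a threshold l and every non-hyperedge below a threshold s ≤ l in the 3-type, 2-cluster hyper-network where a hyperedge exists iff the three nodes share the same cluster id.) -/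
theorem dhne_no_linear_similarity_general (d : ℕ) (s l : ℝ) (hls : s ≤ l) :
    ¬ ∃ (W₁ W₂ W₃ : (Fin d → ℝ) →ₗ[ℝ] ℝ)
        (Y01 Y11 Y02 Y12 Y03 Y13 : Fin d → ℝ),
      W₁ Y01 + W₂ Y02 + W₃ Y03 > l ∧
      W₁ Y11 + W₂ Y02 + W₃ Y03 < s ∧
      W₁ Y11 + W₂ Y12 + W₃ Y13 > l ∧
      W₁ Y01 + W₂ Y12 + W₃ Y13 < s := by
  rintro ⟨W₁, W₂, W₃, Y01, Y11, Y02, Y12, Y03, Y13, hEdge₀, hNonEdge₀, hEdge₁, hNonEdge₁⟩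
  -- Swapping the type-1 nodes between the two hyperedges gives the two non-hyperedges,
  -- so both pairs of scores have the same sum, which is > 2l and < 2s at once.
  linarith

/-- A linear tuplewise similarity function `S(X₁,X₂,X₃) = W₁X₁ + W₂X₂ + W₃X₃` cannot
score every hyperedge above `l` and every non-hyperedge below `s ≤ l` in the 3-type,
2-cluster hyper-network. -/
theorem dhne_no_linear_similarity (d : ℕ) (hd : 1 ≤ d) (s l : ℝ) (hls : s ≤ l) :
    ¬ ∃ (W₁ W₂ W₃ : (Fin d → ℝ) →ₗ[ℝ] ℝ)
        (Y01 Y11 Y02 Y12 Y03 Y13 : Fin d → ℝ),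
      W₁ Y01 + W₂ Y02 + W₃ Y03 > l ∧
      W₁ Y11 + W₂ Y02 + W₃ Y03 < s ∧
      W₁ Y11 + W₂ Y12 + W₃ Y13 > l ∧
      W₁ Y01 + W₂ Y12 + W₃ Y13 < s :=
  dhne_no_linear_similarity_general d s l hls
end

section
/- Consider an LSTM cell recurrence with identity activation functions (i.e., with the sigmoid σ and tanh replaced by the identity): given input sequence x₁, ..., x_T ∈ ℝ² with x_t = (F_t, C_t), hidden states h_t ∈ ℝ², cell states c_t ∈ ℝ², parameters W_f, W_i, W_o, W_C ∈ ℝ^{2×4}, b_f, b_i, b_o, b_C ∈ ℝ², initial states h₀ = c₀ = 0, and updates f_t = W_f·[h_{t−1}; x_t] + b_f, i_t = W_i·[h_{t−1}; x_t] + b_i, o_t = W_o·[h_{t−1}; x_t] + b_o, c̃_t = W_C·[h_{t−1}; x_t] + b_C, c_t = f_t * c_{t−1} + i_t * c̃_t, h_t = o_t * c_t (where * is the entrywise product and [h; x] ∈ ℝ⁴ is concatenation). Then there exists a parameter setting — namely, second rows W_{f,2} = W_{o,2} = (0,0,0,0), W_{i,2} = (0,0,1,0), W_{C,2} = (0,0,0,1),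 b_{f,2} = b_{o,2} = 1, b_{i,2} = b_{C,2} = 0 — such that for every input sequence, the second coordinate of the final hidden state satisfies h_{T,2} = Σ_{t=1}^{T} F_t · C_t. -/
open Matrix

/-- One step of an LSTM cell with identity activation functions.  The state is the
pair `(h, c)` of hidden state and cell state, and the input is `x ∈ ℝ²`; the gates
are `f = W_f·[h; x] + b_f`, `i = W_i·[h; x] + b_i`, `o = W_o·[h; x] + b_o`,
`c̃ = W_C·[h; x] + b_C`, with updates `c' = f * c + i * c̃` and `h' = o * c'`
(entrywise products). -/
def lstmStep (Wf Wi Wo Wc : Matrix (Fin 2) (Fin 4) ℝ) (bf bi bo bc : Fin 2 → ℝ)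
    (hc : (Fin 2 → ℝ) × (Fin 2 → ℝ)) (x : Fin 2 → ℝ) : (Fin 2 → ℝ) × (Fin 2 → ℝ) :=
  let inp : Fin 4 → ℝ := Fin.append hc.1 x
  let f := Wf.mulVec inp + bf
  let i := Wi.mulVec inp + bi
  let o := Wo.mulVec inp + bo
  let ctil := Wc.mulVec inp + bc
  let c := f * hc.2 + i * ctil
  (o * c, c)

/-- Running the identity-activation LSTM on the input sequence `x₁, …, x_T` from the
initial states `h₀ = c₀ = 0`, producing `(h_T, c_T)`. -/
def lstmRun (Wf Wi Wo Wc : Matrix (Fin 2) (Fin 4) ℝ) (bf bi bo bc : Fin 2 → ℝ)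
    (T : ℕ) (x : Fin T → Fin 2 → ℝ) : (Fin 2 → ℝ) × (Fin 2 → ℝ) :=
  (List.ofFn x).foldl (lstmStep Wf Wi Wo Wc bf bi bo bc) (0, 0)

/-!
With these second rows the second coordinate of the cell is a plain accumulator: the forget
gate is `1`, the input gate reads `F_t` and the candidate reads `C_t`, so each step adds
`F_t · C_t` to `c_2`; the output gate is `1`, so `h_2 = c_2` after every step.
-/

theorem List.foldl_eq_add_sum_map {α β M : Type*} [AddMonoid M] (f : β → α → β) (φ : β → M)
    (g : α → M) (hf : ∀ s a, φ (f s a) = φ s + g a) (l : List α) (s : β) :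
    φ (l.foldl f s) = φ s + (l.map g).sum := by
  induction l generalizing s with
  | nil => simp
  | cons a l ih => simp [ih, hf, add_assoc]

section

variable {Wf Wi Wo Wc : Matrix (Fin 2) (Fin 4) ℝ} {bf bi bo bc : Fin 2 → ℝ}

theorem lstmStep_fst_one_eq_snd_one (hWo : Wo 1 = ![0, 0, 0, 0]) (hbo : bo 1 = 1)
    (hc : (Fin 2 → ℝ) × (Fin 2 → ℝ)) (x : Fin 2 → ℝ) :
    (lstmStep Wf Wi Wo Wc bf bi bo bc hc x).1 1 =
      (lstmStep Wf Wi Wo Wc bf bi bo bc hc x).2 1 := by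
  simp [lstmStep, mulVec, hWo, hbo]

theorem lstmStep_snd_one (hWf : Wf 1 = ![0, 0, 0, 0]) (hWi : Wi 1 = ![0, 0, 1, 0])
    (hWc : Wc 1 = ![0, 0, 0, 1]) (hbf : bf 1 = 1) (hbi : bi 1 = 0) (hbc : bc 1 = 0)
    (hc : (Fin 2 → ℝ) × (Fin 2 → ℝ)) (x : Fin 2 → ℝ) :
    (lstmStep Wf Wi Wo Wc bf bi bo bc hc x).2 1 = hc.2 1 + x 0 * x 1 := by
  simp [lstmStep, mulVec, dotProduct, Fin.sum_univ_four, hWf, hWi, hWc, hbf, hbi, hbc]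
  rfl

end

/-- DRNE aggregation theorem (computational core): with second rows
`W_{f,2} = W_{o,2} = (0,0,0,0)`, `W_{i,2} = (0,0,1,0)`, `W_{C,2} = (0,0,0,1)`,
`b_{f,2} = b_{o,2} = 1`, `b_{i,2} = b_{C,2} = 0`, the identity-activation LSTM
satisfies, for every input sequence `x_t = (F_t, C_t)`,
`h_{T,2} = ∑_{t=1}^{T} F_t · C_t`. -/
theorem drne_lstm_accumulates (Wf Wi Wo Wc : Matrix (Fin 2) (Fin 4) ℝ)
    (bf bi bo bc : Fin 2 → ℝ)
    (hWf : Wf 1 = ![0, 0, 0, 0]) (hWo : Wo 1 = ![0, 0, 0, 0])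
    (hWi : Wi 1 = ![0, 0, 1, 0]) (hWc : Wc 1 = ![0, 0, 0, 1])
    (hbf : bf 1 = 1) (hbo : bo 1 = 1) (hbi : bi 1 = 0) (hbc : bc 1 = 0) :
    ∀ (T : ℕ) (x : Fin T → Fin 2 → ℝ),
      (lstmRun Wf Wi Wo Wc bf bi bo bc T x).1 1 = ∑ t, x t 0 * x t 1 := by
  intro T x
  have h_eq_c : (lstmRun Wf Wi Wo Wc bf bi bo bc T x).1 1 =
      (lstmRun Wf Wi Wo Wc bf bi bo bc T x).2 1 :=
    List.foldlRecOn (motive := fun s => s.1 1 = s.2 1) _ _ rfl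
      fun s _ v _ => lstmStep_fst_one_eq_snd_one hWo hbo s v
  rw [h_eq_c]
  refine (List.foldl_eq_add_sum_map (lstmStep Wf Wi Wo Wc bf bi bo bc)
    (fun s => s.2 1) (fun v => v 0 * v 1) (lstmStep_snd_one hWf hWi hWc hbf hbi hbc) _ _).trans ?_
  simp [List.map_ofFn, List.sum_ofFn]
end
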